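/- arXiv:2105.07509 — 2 statements merged into one kernel-verified Lean document; each statement's English description precedes it below -/
import Mathlib

section
/- Let G be a group, A a finite alphabet closed under a formal inversion and mapping onto a semigroup generating set of G, and L ⊆ A* a regular language such that the evaluation map π : L → G is finite-to-one and onto. If there exists a constant k such that for all w₁, w₂ ∈ L and all a, b ∈ A ∪ {ε} with π(aw₁b) = π(w₂) one has D(aw₁b, w₂) ≤ k, then (A, L) is a biautomatic structure, i.e. both (A, L) and (A, L⁻¹) are automatic structures. -/
/-- The evaluation of a word over the alphabet `A` in the group `G`, via the letter map `φ`;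
this is the monoid homomorphism `π : A* → G`. -/
def evalWord {A G : Type*} [Group G] (φ : A → G) (w : List A) : G := (w.map φ).prod

/-- The word metric on `G` relative to the letter map `φ : A → G`:
`d(g,h)` is the least length of a word `u` with `π(u) = g⁻¹h`. -/
noncomputable def wordDist {A G : Type*} [Group G] (φ : A → G) (g h : G) : ℕ :=
  sInf {n | ∃ u : List A, u.length = n ∧ evalWord φ u = g⁻¹ * h}

/-- The synchronous uniform distance between two words: the maximum over `n` of the
word-metric distance between the values of the length-`n` prefixes. -/
noncomputable def unifDist {A G : Type*} [Group G] (φ : A → G) (w₁ w₂ : List A) : ℕ :=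
  sSup {m | ∃ n : ℕ, m = wordDist φ (evalWord φ (w₁.take n)) (evalWord φ (w₂.take n))}

/-- The formal inverse of a word: reverse it and invert each letter via `ι`. -/
def wordInv {A : Type*} (ι : A → A) (w : List A) : List A := w.reverse.map ι

/-- `(A, L)` is an automatic structure for the group `G` (with letter map `φ`):
`L` is regular, maps onto `G`, and satisfies the one-sided fellow traveller property. -/
def IsAutomaticStructure {A G : Type*} [Group G] (φ : A → G) (L : Language A) : Prop :=
  L.IsRegular ∧ (∀ g : G, ∃ w ∈ L, evalWord φ w = g) ∧
    ∃ k : ℕ, ∀ w₁ ∈ L, ∀ w₂ ∈ L, ∀ a : Option A,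
      evalWord φ (w₁ ++ a.toList) = evalWord φ w₂ →
        unifDist φ (w₁ ++ a.toList) w₂ ≤ k

/-- `(A, L)` is a biautomatic structure: both `(A, L)` and `(A, L⁻¹)` are automatic. -/
def IsBiautomaticStructure {A G : Type*} [Group G] (φ : A → G) (ι : A → A)
    (L : Language A) : Prop :=
  IsAutomaticStructure φ L ∧
    IsAutomaticStructure φ ((wordInv ι '' (L : Set (List A)) : Set (List A)) : Language A)

/-!
Write `π` for `evalWord φ`. The prefix of length `n` of `u⁻¹` evaluates to
`π(u)⁻¹ π(u.take (|u| - n))`: the word `u⁻¹` reads `u` backwards from its endpoint. So if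
`π(w) = π(u)`, left invariance and the triangle inequality of the word metric give
`D(w⁻¹, u⁻¹) ≤ D(w, u) + ||w| - |u||`. For `u₁⁻¹c` and `u₂⁻¹` with equal values, the two-sided
hypothesis applied to `c⁻¹u₁` and `u₂` bounds `D`, and it remains to bound `||u₁| - |u₂||`.

That is a pumping argument. If `π(w) = π(u)`, `D(w, u) ≤ k` and `u ∈ L` is much longer than `w`,
then all prefixes of `u` longer than `w` lie in the `k`-ball around `π(u)`, so two of them reach
the same state of a DFA for `L` with the same value in `G`. Pumping the segment between them
gives infinitely many words of `L` with value `π(u)`, contradicting finiteness of the fibres.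
-/

open Function

section Words

variable {A G : Type*} [Group G] (φ : A → G)

lemma evalWord_append (u v : List A) :
    evalWord φ (u ++ v) = evalWord φ u * evalWord φ v := by
  simp [evalWord]

lemma evalWord_take_drop (u : List A) (n : ℕ) :
    evalWord φ (u.take n) * evalWord φ (u.drop n) = evalWord φ u := by
  rw [← evalWord_append, List.take_append_drop]

lemma evalWord_drop_take {m n : ℕ} (u : List A) (hmn : m ≤ n) :
    evalWord φ ((u.take n).drop m) = (evalWord φ (u.take m))⁻¹ * evalWord φ (u.take n) := by
  rw [← evalWord_take_drop φ (u.take n) m, List.take_take, min_eq_left hmn, inv_mul_cancel_left]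

variable {φ} {ι : A → A}

lemma wordInv_append (u v : List A) : wordInv ι (u ++ v) = wordInv ι v ++ wordInv ι u := by
  simp [wordInv]

lemma map_wordInv_wordInv (hι : ∀ a, φ (ι a) = (φ a)⁻¹) (u : List A) :
    (wordInv ι (wordInv ι u)).map φ = u.map φ := by
  simp [wordInv, Function.comp_def, hι]

lemma evalWord_wordInv (hι : ∀ a, φ (ι a) = (φ a)⁻¹) (u : List A) :
    evalWord φ (wordInv ι u) = (evalWord φ u)⁻¹ := by
  simp [evalWord, wordInv, List.prod_inv_reverse, Function.comp_def, hι]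

lemma take_wordInv (u : List A) (n : ℕ) :
    (wordInv ι u).take n = wordInv ι (u.drop (u.length - n)) := by
  simp [wordInv, List.take_reverse]

lemma evalWord_take_wordInv (hι : ∀ a, φ (ι a) = (φ a)⁻¹) (u : List A) (n : ℕ) :
    evalWord φ ((wordInv ι u).take n) = (evalWord φ u)⁻¹ * evalWord φ (u.take (u.length - n)) := by
  rw [take_wordInv, evalWord_wordInv hι, ← evalWord_take_drop φ u (u.length - n)]
  group

end Words

section WordMetric

variable {A G : Type*} [Group G] {φ : A → G}

lemma wordDist_le_length {g h : G} {u : List A} (hu : evalWord φ u = g⁻¹ * h) :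
    wordDist φ g h ≤ u.length :=
  Nat.sInf_le ⟨u, rfl, hu⟩

lemma exists_length_eq_wordDist (hφ : Surjective (evalWord φ)) (g h : G) :
    ∃ u : List A, u.length = wordDist φ g h ∧ evalWord φ u = g⁻¹ * h := by
  obtain ⟨u, hu⟩ := hφ (g⁻¹ * h)
  exact Nat.sInf_mem (s := {n | ∃ u : List A, u.length = n ∧ evalWord φ u = g⁻¹ * h})
    ⟨u.length, u, rfl, hu⟩

lemma wordDist_mul_left (x g h : G) : wordDist φ (x * g) (x * h) = wordDist φ g h := by
  simp [wordDist, mul_assoc]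

lemma wordDist_triangle (hφ : Surjective (evalWord φ)) (g x h : G) :
    wordDist φ g h ≤ wordDist φ g x + wordDist φ x h := by
  obtain ⟨u, hu, hgx⟩ := exists_length_eq_wordDist hφ g x
  obtain ⟨v, hv, hxh⟩ := exists_length_eq_wordDist hφ x h
  calc wordDist φ g h ≤ (u ++ v).length :=
        wordDist_le_length (by rw [evalWord_append, hgx, hxh]; group)
    _ = wordDist φ g x + wordDist φ x h := by rw [List.length_append, hu, hv]

lemma wordDist_evalWord_take_le {ι : A → A} (hι : ∀ a, φ (ι a) = (φ a)⁻¹) (u : List A)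
    (m n : ℕ) :
    wordDist φ (evalWord φ (u.take m)) (evalWord φ (u.take n)) ≤ m - n + (n - m) := by
  rcases le_total m n with hmn | hnm
  · calc _ ≤ ((u.take n).drop m).length := wordDist_le_length (evalWord_drop_take φ u hmn)
      _ ≤ m - n + (n - m) := by simp only [List.length_drop, List.length_take]; omega
  · calc _ ≤ (wordInv ι ((u.take m).drop n)).length := by
          refine wordDist_le_length ?_
          rw [evalWord_wordInv hι, evalWord_drop_take φ u hnm, mul_inv_rev, inv_inv]
      _ ≤ m - n + (n - m) := by
          simp only [wordInv, List.length_map, List.length_reverse, List.length_drop,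
            List.length_take]
          omega

lemma wordDist_le_unifDist (w₁ w₂ : List A) (n : ℕ) :
    wordDist φ (evalWord φ (w₁.take n)) (evalWord φ (w₂.take n)) ≤ unifDist φ w₁ w₂ := by
  set M := max w₁.length w₂.length
  set f := fun i => wordDist φ (evalWord φ (w₁.take i)) (evalWord φ (w₂.take i))
  have hf : ∀ i, f i = f (min i M) := fun i => by
    simp only [f, List.take_eq_take_iff.2 (by omega : min i w₁.length = min (min i M) w₁.length),
      List.take_eq_take_iff.2 (by omega : min i w₂.length = min (min i M) w₂.length)]
  refine le_csSup (((Set.finite_Iic M).image f).bddAbove.mono ?_) ⟨n, rfl⟩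
  rintro _ ⟨i, rfl⟩
  exact ⟨min i M, min_le_right i M, (hf i).symm⟩

lemma unifDist_le {w₁ w₂ : List A} {K : ℕ}
    (h : ∀ n, wordDist φ (evalWord φ (w₁.take n)) (evalWord φ (w₂.take n)) ≤ K) :
    unifDist φ w₁ w₂ ≤ K :=
  csSup_le ⟨_, 0, rfl⟩ (by rintro _ ⟨n, rfl⟩; exact h n)

lemma unifDist_eq_of_map_eq {w w' : List A} (hw : w.map φ = w'.map φ) (v : List A) :
    unifDist φ w v = unifDist φ w' v := by
  simp only [unifDist, evalWord, List.map_take, hw]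

end WordMetric

section Reversal

variable {A G : Type*} [Group G] {φ : A → G} {ι : A → A}

theorem unifDist_wordInv_le (hφ : Surjective (evalWord φ)) (hι : ∀ a, φ (ι a) = (φ a)⁻¹)
    {w u : List A} (hwu : evalWord φ w = evalWord φ u) :
    unifDist φ (wordInv ι w) (wordInv ι u) ≤
      unifDist φ w u + (w.length - u.length + (u.length - w.length)) := by
  refine unifDist_le fun n => ?_
  rw [evalWord_take_wordInv hι, evalWord_take_wordInv hι, hwu, wordDist_mul_left]
  set p := w.length - n
  set q := u.length - n
  calc _ ≤ wordDist φ (evalWord φ (w.take p)) (evalWord φ (w.take q)) +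
          wordDist φ (evalWord φ (w.take q)) (evalWord φ (u.take q)) :=
        wordDist_triangle hφ _ _ _
    _ ≤ (p - q + (q - p)) + unifDist φ w u :=
        add_le_add (wordDist_evalWord_take_le hι w p q) (wordDist_le_unifDist w u q)
    _ ≤ _ := by omega

end Reversal

theorem Language.IsRegular.map {α β : Type*} {L : Language α} (h : L.IsRegular) (f : α → β) :
    (Language.map f L).IsRegular := by
  classical
  obtain ⟨σ, _, M, rfl⟩ := h
  let N : NFA β σ := ⟨fun s b => {t | ∃ a, f a = b ∧ M.step s a = t}, {M.start}, M.accept⟩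
  have hN : ∀ (y : List β) (s t : σ),
      t ∈ N.evalFrom {s} y ↔ ∃ x : List α, x.map f = y ∧ M.evalFrom s x = t := by
    intro y
    induction y with
    | nil => simp [eq_comm]
    | cons b y ih =>
      intro s t
      simp only [NFA.evalFrom_cons, NFA.stepSet_singleton]
      rw [NFA.mem_evalFrom_iff_exists]
      constructor
      · rintro ⟨_, ⟨a, rfl, rfl⟩, ht⟩
        obtain ⟨x, rfl, rfl⟩ := (ih _ t).1 ht
        exact ⟨a :: x, rfl, rfl⟩
      · rintro ⟨_ | ⟨a, x⟩, hxy, rfl⟩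
        · cases hxy
        · obtain ⟨rfl, rfl⟩ := List.cons_eq_cons.1 hxy
          exact ⟨_, ⟨a, rfl, rfl⟩, (ih _ _).2 ⟨x, rfl, rfl⟩⟩
  refine ⟨Set σ, inferInstance, N.toDFA, ?_⟩
  ext y
  rw [NFA.toDFA_correct, NFA.mem_accepts]
  change (∃ s ∈ M.accept, s ∈ N.evalFrom {M.start} y) ↔ y ∈ List.map f '' M.accepts
  simp only [hN]
  constructor
  · rintro ⟨_, hs, x, rfl, rfl⟩
    exact ⟨x, hs, rfl⟩
  · rintro ⟨x, hx, rfl⟩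
    exact ⟨_, hx, x, rfl, rfl⟩

lemma Language.IsRegular.image_wordInv {A : Type*} {L : Language A} (h : L.IsRegular)
    (ι : A → A) :
    Language.IsRegular ((wordInv ι '' (L : Set (List A)) : Set (List A)) : Language A) := by
  have : wordInv ι '' (L : Set (List A)) = Language.map ι L.reverse := by
    change _ = List.map ι '' (L.reverse : Set (List A))
    rw [Language.reverse_eq_image]
    exact Set.image_comp _ _ _
  rw [this]
  exact h.reverse.map ι

lemma DFA.append_flatten_replicate_append_mem_accepts {α σ : Type*} (M : DFA α σ)
    {x y z : List α} (hy : M.evalFrom (M.eval x) y = M.eval x) (h : x ++ y ++ z ∈ M.accepts)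
    (i : ℕ) : x ++ (List.replicate i y).flatten ++ z ∈ M.accepts := by
  have hloop : M.evalFrom (M.eval x) (List.replicate i y).flatten = M.eval x :=
    M.evalFrom_of_pow hy <|
      Language.mem_kstar.2 ⟨_, rfl, fun _ hy' => List.eq_of_mem_replicate hy'⟩
  rw [DFA.mem_accepts] at h ⊢
  unfold DFA.eval at *
  rw [DFA.evalFrom_of_append, DFA.evalFrom_of_append] at h ⊢
  rwa [hloop, ← hy]

section Pumping

variable {A G σ : Type*} [Group G] {φ : A → G}

lemma evalWord_flatten_replicate {y : List A} (hy : evalWord φ y = 1) (i : ℕ) :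
    evalWord φ (List.replicate i y).flatten = 1 := by
  induction i with
  | zero => rfl
  | succ i ih => rw [List.replicate_succ, List.flatten_cons, evalWord_append, hy, ih, one_mul]

theorem injOn_eval_evalWord_take (M : DFA A σ)
    (hfin : ∀ g : G, {w : List A | w ∈ M.accepts ∧ evalWord φ w = g}.Finite)
    {u : List A} (hu : u ∈ M.accepts) :
    Set.InjOn (fun n => (M.eval (u.take n), evalWord φ (u.take n))) (Set.Iic u.length) := by
  intro n hn n' hn' hnn'
  by_contra hne
  wlog hlt : n < n' generalizing n n'
  · exact this hn' hn hnn'.symm (Ne.symm hne) (by omega)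
  obtain ⟨hstate, hval⟩ := Prod.mk.inj hnn'
  set x := u.take n
  set y := (u.take n').drop n
  set z := u.drop n'
  have hxy : x ++ y = u.take n' := by
    rw [← List.take_append_drop n (u.take n'), List.take_take, min_eq_left hlt.le]
  have hxyz : x ++ y ++ z = u := by rw [hxy, List.take_append_drop]
  have hy_state : M.evalFrom (M.eval x) y = M.eval x := by
    change M.evalFrom (M.evalFrom M.start x) y = _
    rw [← DFA.evalFrom_of_append, hxy]
    exact hstate.symm
  have hy_val : evalWord φ y = 1 := by
    rw [evalWord_drop_take φ u hlt.le, ← hval, inv_mul_cancel]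
  have hy_len : y.length = n' - n := by
    simp only [y, List.length_drop, List.length_take]
    have := Set.mem_Iic.1 hn'
    omega
  let W : ℕ → List A := fun i => x ++ (List.replicate i y).flatten ++ z
  have hW_inj : Injective W := fun i j hij => by
    have := congrArg List.length hij
    simp only [W, List.length_append, List.length_flatten, List.map_replicate,
      List.sum_replicate, smul_eq_mul] at this
    exact Nat.eq_of_mul_eq_mul_right (m := y.length) (by omega) (by omega)
  refine (hfin (evalWord φ u)).not_infinite
    (Set.infinite_of_injective_forall_mem hW_inj fun i => ?_)
  refine ⟨M.append_flatten_replicate_append_mem_accepts hy_state (hxyz ▸ hu) i, ?_⟩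
  rw [← hxyz]
  simp only [W, evalWord_append, evalWord_flatten_replicate hy_val, hy_val]

end Pumping

theorem exists_length_le_add_of_unifDist_le {A G : Type*} [Finite A] [Group G] {φ : A → G}
    (hφ : Surjective (evalWord φ)) {L : Language A} (hL : L.IsRegular)
    (hfin : ∀ g : G, {w : List A | w ∈ L ∧ evalWord φ w = g}.Finite) (k : ℕ) :
    ∃ N : ℕ, ∀ w : List A, ∀ u ∈ L, evalWord φ w = evalWord φ u → unifDist φ w u ≤ k →
      u.length ≤ w.length + N := by
  classical
  obtain ⟨σ, _, M, rfl⟩ := hL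
  have hball : (evalWord φ '' {v : List A | v.length ≤ k}).Finite :=
    (List.finite_length_le A k).image _
  let S : Finset (σ × G) := Finset.univ ×ˢ hball.toFinset
  refine ⟨S.card, fun w u hu hwu hD => ?_⟩
  have hmaps : Set.MapsTo
      (fun n => (M.eval (u.take n), (evalWord φ u)⁻¹ * evalWord φ (u.take n)))
      (Finset.Ioc w.length u.length) S := by
    intro n hn
    obtain ⟨v, hv_len, hv⟩ :=
      exists_length_eq_wordDist hφ (evalWord φ u) (evalWord φ (u.take n))
    have hdist := wordDist_le_unifDist (φ := φ) w u n
    rw [List.take_of_length_le (Finset.mem_Ioc.1 hn).1.le, hwu] at hdist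
    exact Finset.mem_product.2
      ⟨Finset.mem_univ _, hball.mem_toFinset.2 ⟨v, show v.length ≤ k by omega, hv⟩⟩
  have hinj : Set.InjOn
      (fun n => (M.eval (u.take n), (evalWord φ u)⁻¹ * evalWord φ (u.take n)))
      (Finset.Ioc w.length u.length) := by
    intro n hn n' hn' hnn'
    obtain ⟨hstate, hval⟩ := Prod.mk.inj hnn'
    exact injOn_eval_evalWord_take M hfin hu (Finset.mem_Ioc.1 hn).2
      (Finset.mem_Ioc.1 hn').2 (Prod.ext hstate (mul_left_cancel hval))
  have hcard := Finset.card_le_card_of_injOn _ hmaps hinj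
  rw [Nat.card_Ioc] at hcard
  omega

theorem unifDist_wordInv_append_le {A G : Type*} [Group G] {φ : A → G} {ι : A → A}
    (hφ : Surjective (evalWord φ)) (hι : ∀ a, φ (ι a) = (φ a)⁻¹) {L : Language A} {k N : ℕ}
    (hk : ∀ w₁ ∈ L, ∀ w₂ ∈ L, ∀ a : Option A,
      evalWord φ (a.toList ++ w₁) = evalWord φ w₂ → unifDist φ (a.toList ++ w₁) w₂ ≤ k)
    (hN : ∀ w : List A, ∀ u ∈ L, evalWord φ w = evalWord φ u → unifDist φ w u ≤ k →
      u.length ≤ w.length + N)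
    {u₁ u₂ : List A} (h₁ : u₁ ∈ L) (h₂ : u₂ ∈ L) (c : Option A)
    (hc : evalWord φ (wordInv ι u₁ ++ c.toList) = evalWord φ (wordInv ι u₂)) :
    unifDist φ (wordInv ι u₁ ++ c.toList) (wordInv ι u₂) ≤ k + (N + 2) := by
  have hc_inv : (c.map ι).toList = wordInv ι c.toList := by cases c <;> rfl
  rw [evalWord_append, evalWord_wordInv hι, evalWord_wordInv hι, inv_mul_eq_iff_eq_mul] at hc
  set w := (c.map ι).toList ++ u₁
  have hw : evalWord φ w = evalWord φ u₂ := by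
    rw [evalWord_append, hc_inv, evalWord_wordInv hι, hc]
    group
  have hw' : evalWord φ (c.toList ++ u₂) = evalWord φ u₁ := by
    rw [evalWord_append, hc]
    group
  have hD : unifDist φ w u₂ ≤ k := hk u₁ h₁ u₂ h₂ _ hw
  have h₂₁ := hN w u₂ h₂ hw hD
  have h₁₂ := hN _ u₁ h₁ hw' (hk u₂ h₂ u₁ h₁ c hw')
  have hw_len : w.length ≤ u₁.length + 1 := by cases c <;> simp [w]
  have hw'_len : (c.toList ++ u₂).length ≤ u₂.length + 1 := by cases c <;> simp
  have hw_map : (wordInv ι w).map φ = (wordInv ι u₁ ++ c.toList).map φ := by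
    rw [wordInv_append, hc_inv, List.map_append, List.map_append, map_wordInv_wordInv hι]
  rw [← unifDist_eq_of_map_eq hw_map]
  refine (unifDist_wordInv_le hφ hι hw).trans ?_
  omega

theorem biautomatic_of_two_sided_fellow_traveller_general {A G : Type*} [Fintype A] [Group G]
    (φ : A → G) (ι : A → A)
    (hι : ∀ a : A, φ (ι a) = (φ a)⁻¹)
    (L : Language A) (hreg : L.IsRegular)
    (honto : ∀ g : G, ∃ w ∈ L, evalWord φ w = g)
    (hfin : ∀ g : G, {w : List A | w ∈ L ∧ evalWord φ w = g}.Finite)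
    (k : ℕ)
    (hk : ∀ w₁ ∈ L, ∀ w₂ ∈ L, ∀ a b : Option A,
      evalWord φ (a.toList ++ w₁ ++ b.toList) = evalWord φ w₂ →
        unifDist φ (a.toList ++ w₁ ++ b.toList) w₂ ≤ k) :
    IsBiautomaticStructure φ ι L := by
  have hφ : Surjective (evalWord φ) := fun g => (honto g).imp fun _ => And.right
  have hk_left : ∀ w₁ ∈ L, ∀ w₂ ∈ L, ∀ a : Option A,
      evalWord φ (a.toList ++ w₁) = evalWord φ w₂ → unifDist φ (a.toList ++ w₁) w₂ ≤ k :=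
    fun w₁ h₁ w₂ h₂ a h => by simpa using hk w₁ h₁ w₂ h₂ a none (by simpa using h)
  obtain ⟨N, hN⟩ := exists_length_le_add_of_unifDist_le hφ hreg hfin k
  refine ⟨⟨hreg, honto, k, fun w₁ h₁ w₂ h₂ => hk w₁ h₁ w₂ h₂ none⟩, hreg.image_wordInv ι,
    fun g => ?_, k + (N + 2), ?_⟩
  · obtain ⟨w, hw, hwg⟩ := honto g⁻¹
    exact ⟨wordInv ι w, ⟨w, hw, rfl⟩, by rw [evalWord_wordInv hι, hwg, inv_inv]⟩
  · rintro _ ⟨u₁, h₁, rfl⟩ _ ⟨u₂, h₂, rfl⟩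
    exact unifDist_wordInv_append_le hφ hι hk_left hN h₁ h₂

/-- Theorem 5, "if" direction: if `π : L → G` is finite-to-one and onto, `L` is regular, and
the two-sided fellow traveller property holds for some constant `k`, then `(A, L)` is a
biautomatic structure. -/
theorem biautomatic_of_two_sided_fellow_traveller {A G : Type*} [Fintype A] [Group G]
    (φ : A → G) (ι : A → A)
    (hgen : Subsemigroup.closure (Set.range φ) = ⊤)
    (hι : ∀ a : A, φ (ι a) = (φ a)⁻¹)
    (L : Language A) (hreg : L.IsRegular)
    (honto : ∀ g : G, ∃ w ∈ L, evalWord φ w = g)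
    (hfin : ∀ g : G, {w : List A | w ∈ L ∧ evalWord φ w = g}.Finite)
    (k : ℕ)
    (hk : ∀ w₁ ∈ L, ∀ w₂ ∈ L, ∀ a b : Option A,
      evalWord φ (a.toList ++ w₁ ++ b.toList) = evalWord φ w₂ →
        unifDist φ (a.toList ++ w₁ ++ b.toList) w₂ ≤ k) :
    IsBiautomaticStructure φ ι L :=
  biautomatic_of_two_sided_fellow_traveller_general φ ι hι L hreg honto hfin k hk
end

section
/- There exist a group G, a finite alphabet A closed under a formal inversion and mapping onto a semigroup generating set of G, and a regular language L ⊆ A* mapping onto G, such that there is a constant k with D(aw₁b, w₂) ≤ k for all w₁, w₂ ∈ L and all a, b ∈ A ∪ {ε} satisfying π(aw₁b) = π(w₂), and yet (A, L) is not a biautomatic structure. (In particular, Lemma 2.5.5 of Epstein et al., 'Word Processing in Groups', is false as stated.) -/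
/-! Take `G = ℤ` with letters `t ↦ 1`, `tInv ↦ -1`, `e ↦ 0` and `L = t* e* ∪ tInv* e*`. A word
of `L` walks geodesically to its endpoint and then idles, so its prefix values are determined by
the endpoint alone. Adding a letter at either end moves the endpoint by at most one per letter
and delays the walk by at most one step, which gives the two-sided fellow traveller bound. But
`L⁻¹` contains `tᵏ` and `eᵏ tᵏ`, which represent the same element and are `k` apart at time `k`,
so `(A, L⁻¹)` is not automatic. `L` is regular since it consists of the words in which every
letter is followed by itself or by `e`. -/

theorem unifDist_le_iff {A G : Type*} [Group G] (φ : A → G) (w₁ w₂ : List A) (k : ℕ) :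
    unifDist φ w₁ w₂ ≤ k ↔
      ∀ n, wordDist φ (evalWord φ (w₁.take n)) (evalWord φ (w₂.take n)) ≤ k := by
  set f : ℕ → ℕ := fun n => wordDist φ (evalWord φ (w₁.take n)) (evalWord φ (w₂.take n))
  have range_eq : {m | ∃ n, m = f n} = Set.range f := by
    ext m; exact exists_congr fun n => eq_comm
  have bdd : BddAbove (Set.range f) := by
    obtain ⟨N, hN₁, hN₂⟩ : ∃ N, w₁.length ≤ N ∧ w₂.length ≤ N :=
      ⟨_, le_max_left _ _, le_max_right _ _⟩
    -- Past `N` both prefixes are the whole words, so `f` takes only finitely many values.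
    refine ((Set.finite_Iic N).image f).bddAbove.mono ?_
    rintro _ ⟨n, rfl⟩
    by_cases hn : n ≤ N
    · exact ⟨n, hn, rfl⟩
    · refine ⟨N, Set.mem_Iic.2 le_rfl, ?_⟩
      simp only [f, List.take_of_length_le hN₁, List.take_of_length_le hN₂,
        List.take_of_length_le (show w₁.length ≤ n by omega),
        List.take_of_length_le (show w₂.length ≤ n by omega)]
  rw [unifDist, range_eq, csSup_le_iff bdd (Set.range_nonempty f), Set.forall_mem_range]

section ChainLanguage

variable {α : Type*} (R : α → α → Prop) [DecidableRel R]

/-- States: `none` is a dead state, `some none` the start state, and `some (some a)` remembers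
that the last letter read was `a`. -/
def chainDFA : DFA α (Option (Option α)) where
  step
    | some (some b), a => if R b a then some (some a) else none
    | some none, a => some (some a)
    | none, _ => none
  start := some none
  accept := {s | s.isSome}

theorem chainDFA_evalFrom_none (w : List α) : (chainDFA R).evalFrom none w = none := by
  induction w with
  | nil => rfl
  | cons a w ih => exact ih

theorem chainDFA_evalFrom_mem_accept_iff (b : α) (w : List α) :
    (chainDFA R).evalFrom (some (some b)) w ∈ (chainDFA R).accept ↔ (b :: w).IsChain R := by
  induction w generalizing b with
  | nil => simp [chainDFA]
  | cons a w ih =>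
    rw [DFA.evalFrom_cons, List.isChain_cons_cons]
    by_cases hba : R b a
    · rw [show (chainDFA R).step (some (some b)) a = some (some a) from if_pos hba, ih]
      simp [hba]
    · rw [show (chainDFA R).step (some (some b)) a = none from if_neg hba,
        chainDFA_evalFrom_none]
      simp [chainDFA, hba]

theorem accepts_chainDFA : (chainDFA R).accepts = {w | w.IsChain R} := by
  ext w
  cases w with
  | nil => exact iff_of_true rfl List.IsChain.nil
  | cons a w =>
    rw [DFA.mem_accepts, DFA.eval, DFA.evalFrom_cons]
    exact chainDFA_evalFrom_mem_accept_iff R a w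

end ChainLanguage

theorem Language.isRegular_setOf_isChain {α : Type*} [Finite α] (R : α → α → Prop) :
    Language.IsRegular ({w | w.IsChain R} : Set (List α)) := by
  classical
  have := Fintype.ofFinite α
  exact Language.isRegular_iff.2 ⟨_, inferInstance, chainDFA R, accepts_chainDFA R⟩

namespace Counterexample

open Multiplicative

inductive Letter : Type
  | t | tInv | e
  deriving DecidableEq

instance : Fintype Letter := ⟨{.t, .tInv, .e}, fun a => by cases a <;> simp⟩

namespace Letter

def val : Letter → ℤ
  | t => 1
  | tInv => -1
  | e => 0

def inv : Letter → Letter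
  | t => tInv
  | tInv => t
  | e => e

end Letter

def letterMap (a : Letter) : Multiplicative ℤ := ofAdd a.val

theorem letterMap_inv (a : Letter) : letterMap a.inv = (letterMap a)⁻¹ := by
  cases a <;> rfl

theorem closure_range_letterMap : Subsemigroup.closure (Set.range letterMap) = ⊤ := by
  have mem (a : Letter) : letterMap a ∈ Subsemigroup.closure (Set.range letterMap) :=
    Subsemigroup.subset_closure ⟨a, rfl⟩
  suffices ∀ n : ℤ, ofAdd n ∈ Subsemigroup.closure (Set.range letterMap) from
    eq_top_iff.2 fun g _ => this (toAdd g)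
  intro n
  induction n using Int.induction_on with
  | zero => exact mem .e
  | succ n ih => exact Subsemigroup.mul_mem _ ih (mem .t)
  | pred n ih => exact Subsemigroup.mul_mem _ ih (mem .tInv)

def weight (w : List Letter) : ℤ := (w.map Letter.val).sum

@[simp] theorem weight_append (u v : List Letter) : weight (u ++ v) = weight u + weight v := by
  simp [weight]

@[simp] theorem weight_replicate (n : ℕ) (c : Letter) :
    weight (List.replicate n c) = n * c.val := by
  simp [weight, List.sum_replicate]

theorem evalWord_letterMap (w : List Letter) : evalWord letterMap w = ofAdd (weight w) := by
  rw [weight, ofAdd_list_prod, List.map_map]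
  rfl

theorem natAbs_weight_le_length (w : List Letter) : (weight w).natAbs ≤ w.length := by
  induction w with
  | nil => simp [weight]
  | cons a w ih =>
    have weight_cons : weight (a :: w) = a.val + weight w := rfl
    cases a <;> simp only [weight_cons, Letter.val, List.length_cons] <;> omega

def geodesicWord (d : ℤ) : List Letter :=
  List.replicate d.natAbs (if 0 ≤ d then .t else .tInv)

@[simp] theorem length_geodesicWord (d : ℤ) : (geodesicWord d).length = d.natAbs := by
  simp [geodesicWord]

@[simp] theorem weight_geodesicWord (d : ℤ) : weight (geodesicWord d) = d := by
  unfold geodesicWord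
  split_ifs with h <;> simp only [weight_replicate, Letter.val] <;> omega

theorem wordDist_letterMap (p q : ℤ) :
    wordDist letterMap (ofAdd p) (ofAdd q) = (q - p).natAbs := by
  have eval_iff (u : List Letter) :
      evalWord letterMap u = (ofAdd p)⁻¹ * ofAdd q ↔ weight u = q - p := by
    rw [evalWord_letterMap, ← ofAdd_neg, ← ofAdd_add, ofAdd.injective.eq_iff, neg_add_eq_sub]
  have geodesic : (geodesicWord (q - p)).length = (q - p).natAbs ∧
      evalWord letterMap (geodesicWord (q - p)) = (ofAdd p)⁻¹ * ofAdd q :=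
    ⟨length_geodesicWord _, (eval_iff _).2 (weight_geodesicWord _)⟩
  refine le_antisymm (Nat.sInf_le ⟨_, geodesic⟩) (le_csInf ⟨_, _, geodesic⟩ ?_)
  rintro _ ⟨u, rfl, hu⟩
  simpa [(eval_iff u).1 hu] using natAbs_weight_le_length u

theorem wordDist_evalWord_letterMap (u v : List Letter) :
    wordDist letterMap (evalWord letterMap u) (evalWord letterMap v) =
      (weight v - weight u).natAbs := by
  rw [evalWord_letterMap, evalWord_letterMap, wordDist_letterMap]

def lang : Language Letter := {w | ∃ c n m, w = List.replicate n c ++ List.replicate m .e}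

theorem mem_lang_iff_isChain (w : List Letter) :
    w ∈ lang ↔ w.IsChain (fun a b => b = a ∨ b = .e) := by
  constructor
  · rintro ⟨c, n, m, rfl⟩
    refine List.isChain_append.2 ⟨List.isChain_replicate_of_rel n (Or.inl rfl),
      List.isChain_replicate_of_rel m (Or.inl rfl), fun _ _ y hy => Or.inr ?_⟩
    exact List.eq_of_mem_replicate (List.mem_of_mem_head? hy)
  · induction w with
    | nil => exact fun _ => ⟨.e, 0, 0, rfl⟩
    | cons a w ih =>
      intro h
      rw [List.isChain_cons] at h
      obtain ⟨c, n, m, rfl⟩ := ih h.2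
      cases n with
      | zero => exact ⟨a, 1, m, rfl⟩
      | succ n =>
        rcases h.1 c (by simp [List.replicate_succ]) with rfl | rfl
        · exact ⟨c, n + 2, m, rfl⟩
        · exact ⟨a, 1, n + 1 + m, by rw [List.replicate_append_replicate]; rfl⟩

theorem isRegular_lang : lang.IsRegular := by
  have : lang = ({w | w.IsChain (fun a b => b = a ∨ b = .e)} : Set (List Letter)) :=
    Set.ext mem_lang_iff_isChain
  rw [this]
  exact Language.isRegular_setOf_isChain _

theorem geodesicWord_mem_lang (d : ℤ) : geodesicWord d ∈ lang :=
  ⟨_, d.natAbs, 0, (List.append_nil _).symm⟩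

theorem exists_mem_lang_evalWord (g : Multiplicative ℤ) : ∃ w ∈ lang, evalWord letterMap w = g :=
  ⟨geodesicWord (toAdd g), geodesicWord_mem_lang _, by simp [evalWord_letterMap]⟩

theorem weight_take_of_mem_lang {w : List Letter} (hw : w ∈ lang) (j : ℕ) :
    weight (w.take j) = max (-(j : ℤ)) (min (j : ℤ) (weight w)) := by
  obtain ⟨c, n, m, rfl⟩ := hw
  simp only [List.take_append, List.take_replicate, weight_append, weight_replicate]
  cases c <;> simp only [Letter.val] <;> omega

theorem natAbs_weight_take_toList_le_one (a : Option Letter) (j : ℕ) :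
    (weight (a.toList.take j)).natAbs ≤ 1 :=
  (natAbs_weight_le_length _).trans
    ((List.length_take_le' _ _).trans Option.length_toList_le)

theorem unifDist_append_le_five {w₁ w₂ : List Letter} (hw₁ : w₁ ∈ lang) (hw₂ : w₂ ∈ lang)
    (a b : Option Letter)
    (h : evalWord letterMap (a.toList ++ w₁ ++ b.toList) = evalWord letterMap w₂) :
    unifDist letterMap (a.toList ++ w₁ ++ b.toList) w₂ ≤ 5 := by
  rw [evalWord_letterMap, evalWord_letterMap, ofAdd.injective.eq_iff] at h
  refine (unifDist_le_iff _ _ _ _).2 fun j => ?_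
  have ha := natAbs_weight_take_toList_le_one a j
  have hb := natAbs_weight_take_toList_le_one b (j - (a.toList ++ w₁).length)
  have ha' := natAbs_weight_take_toList_le_one a a.toList.length
  have hb' := natAbs_weight_take_toList_le_one b b.toList.length
  have hla : a.toList.length ≤ 1 := Option.length_toList_le
  rw [List.take_length] at ha' hb'
  simp only [weight_append] at h
  rw [wordDist_evalWord_letterMap, List.take_append, List.take_append, weight_append,
    weight_append, weight_take_of_mem_lang hw₁, weight_take_of_mem_lang hw₂, ← h]
  omega

theorem not_isAutomaticStructure_inv :
    ¬ IsAutomaticStructure letterMap ((wordInv Letter.inv '' (lang : Set (List Letter)) :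
      Set (List Letter)) : Language Letter) := by
  rintro ⟨-, -, k, hk⟩
  have inv₁ : wordInv Letter.inv (List.replicate (k + 1) .tInv) = List.replicate (k + 1) .t := by
    simp [wordInv, Letter.inv]
  have inv₂ : wordInv Letter.inv (List.replicate (k + 1) .tInv ++ List.replicate (k + 1) .e) =
      List.replicate (k + 1) .e ++ List.replicate (k + 1) .t := by
    simp [wordInv, Letter.inv]
  have h := hk _ ⟨_, ⟨.tInv, k + 1, 0, (List.append_nil _).symm⟩, inv₁⟩
    _ ⟨_, ⟨.tInv, k + 1, k + 1, rfl⟩, inv₂⟩ none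
    (by simp [evalWord_letterMap, Letter.val])
  rw [Option.toList_none, List.append_nil, unifDist_le_iff] at h
  have := h (k + 1)
  simp [wordDist_evalWord_letterMap, Letter.val] at this
  omega

end Counterexample

open Counterexample in
/-- Lemma 2.5.5 of Epstein et al. is false as stated: there exist a group `G`, a finite
alphabet `A` with a formal inversion mapping onto a semigroup generating set of `G`, and a
regular language `L ⊆ A*` mapping onto `G`, such that the two-sided fellow traveller
condition holds for some constant `k`, and yet `(A, L)` is not a biautomatic structure. -/
theorem lemma_2_5_5_false :
    ∃ (G : Type) (instG : Group G) (A : Type) (instA : Fintype A)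
      (φ : A → G) (ι : A → A) (L : Language A),
      haveI := instG; haveI := instA;
      Subsemigroup.closure (Set.range φ) = ⊤ ∧
      (∀ a : A, φ (ι a) = (φ a)⁻¹) ∧
      L.IsRegular ∧
      (∀ g : G, ∃ w ∈ L, evalWord φ w = g) ∧
      (∃ k : ℕ, ∀ w₁ ∈ L, ∀ w₂ ∈ L, ∀ a b : Option A,
        evalWord φ (a.toList ++ w₁ ++ b.toList) = evalWord φ w₂ →
          unifDist φ (a.toList ++ w₁ ++ b.toList) w₂ ≤ k) ∧
      ¬ IsBiautomaticStructure φ ι L :=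
  ⟨Multiplicative ℤ, inferInstance, Letter, inferInstance, letterMap, Letter.inv, lang,
    closure_range_letterMap, letterMap_inv, isRegular_lang, exists_mem_lang_evalWord,
    ⟨5, fun _ hw₁ _ hw₂ => unifDist_append_le_five hw₁ hw₂⟩,
    fun h => not_isAutomaticStructure_inv h.2⟩
end
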